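/- Let S and T be trees and e = (s,t) ∈ S ⊗ T with s a node of S and t a node of T (a 'fork'). Then there are exactly two maximal tuples strictly below e in S ⊗ T, namely s × t^↑ and s^↑ × t; in particular, neither s × t^↑ ≤ s^↑ × t nor s^↑ × t ≤ s × t^↑ holds in S ⊗ T. -/

import Mathlib

/-!
A relation `g̲ ≤ (s,t)` in `S ⊗ T` is assembled from generators `s̲ × t ≤ (s,t)` and
`s × t̲ ≤ (s,t)`, so induction on its construction shows that every tuple strictly below the
fork lies below `s^↑ × t` or below `s × t^↑`. A descent in `S ⊗ T` projects to descents in both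
coordinates; hence neither of the two tuples lies below the other (a letter of `t^↑` lies
strictly below `t`), and each is an antichain. For an antichain `f̲`, the relations
`f̲ ≤ g̲ ≤ f̲` force `g̲ = f̲`, which gives maximality of both tuples and that there are no others.
-/

universe u

namespace BroadPaper

/-- A broad relation on `X`: a relation between finite unordered tuples
(multisets) over `X` and elements of `X`. -/
abbrev Rel (X : Type u) : Type u := Multiset X → X → Prop

variable {X : Type u} {Y : Type u} {A : Type u} {B : Type u} {Z : Type u}

/-- Broad transitivity: if `f₁ ⋯ fₙ ≤ e` and `g̲ᵢ ≤ fᵢ` then `g̲₁ ⋯ g̲ₙ ≤ e`,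
encoded via a multiset of pairs `(g̲ᵢ, fᵢ)`. -/
def BTrans (r : Rel X) : Prop :=
  ∀ (p : Multiset (Multiset X × X)) (e : X),
    r (p.map Prod.snd) e → (∀ q ∈ p, r q.1 q.2) → r ((p.map Prod.fst).sum) e

/-- A pre-broad poset: reflexivity plus broad transitivity. -/
def IsPreBroad (r : Rel X) : Prop := (∀ e : X, r {e} e) ∧ BTrans r

/-- A (commutative) broad poset: a pre-broad poset satisfying antisymmetry. -/
def IsBroad (r : Rel X) : Prop :=
  IsPreBroad r ∧ ∀ e f : X, r {e} f → r {f} e → e = f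

/-- Simplicity: letters in any broad relation are pairwise distinct. -/
def Simple (r : Rel X) : Prop := ∀ fs e, r fs e → fs.Nodup

/-- The descendant relation `f ≤_d e`. -/
def descends (r : Rel X) (f e : X) : Prop := ∃ fs, r fs e ∧ f ∈ fs

def Comparable (r : Rel X) (f g : X) : Prop := descends r f g ∨ descends r g f

def Incomp (r : Rel X) (f g : X) : Prop := ¬ descends r f g ∧ ¬ descends r g f

/-- Blockwise extension of a broad relation to a relation between tuples:
`fs ≤ es` iff `fs = f̲₁ ⋯ f̲ₖ`, `es = e₁ ⋯ eₖ` with `f̲ᵢ ≤ eᵢ`. -/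
def tupleLE (r : Rel X) (fs es : Multiset X) : Prop :=
  ∃ p : Multiset (Multiset X × X),
    p.map Prod.snd = es ∧ (p.map Prod.fst).sum = fs ∧ ∀ q ∈ p, r q.1 q.2

/-- A leaf: no tuple strictly below `e`. -/
def IsLeaf (r : Rel X) (e : X) : Prop := ¬ ∃ fs, r fs e ∧ fs ≠ ({e} : Multiset X)

/-- `fs` is the maximum tuple strictly below `e` (written `e^↑`).
If `fs ≠ 0`, `e` is a node; if `fs = 0`, `e` is a stump. -/
def upTuple (r : Rel X) (e : X) (fs : Multiset X) : Prop :=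
  (r fs e ∧ fs ≠ ({e} : Multiset X)) ∧
    ∀ gs, r gs e → gs ≠ ({e} : Multiset X) → tupleLE r gs fs

def IsStump (r : Rel X) (e : X) : Prop := upTuple r e 0

/-- A dendroidally ordered set (tree): a finite simple broad poset in which
every element is a leaf, node or stump, with a `≤_d`-maximum (root). -/
def IsTree (r : Rel X) : Prop :=
  IsBroad r ∧ Finite X ∧ Simple r ∧
    (∀ e : X, IsLeaf r e ∨ ∃ fs, upTuple r e fs) ∧
    ∃ rt : X, ∀ e, descends r e rt

def IsMaxEl (r : Rel X) (e : X) : Prop := ∀ s, descends r e s → s = e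

/-- A forestially ordered set (forest): each element has a unique
`≤_d`-maximal element above it. -/
def IsForest (r : Rel X) : Prop :=
  IsBroad r ∧ Finite X ∧ Simple r ∧
    (∀ e : X, IsLeaf r e ∨ ∃ fs, upTuple r e fs) ∧
    ∀ e : X, ∃! rt : X, IsMaxEl r rt ∧ descends r e rt

/-- A map of broad posets: preserves broad relations (letterwise on tuples). -/
def BroadHom (r : Rel X) (r' : Rel Y) (φ : X → Y) : Prop :=
  ∀ fs e, r fs e → r' (fs.map φ) (φ e)

/-- `rs` is the root tuple: the tuple of `≤_d`-maximal elements (no repeats). -/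
def IsRootTuple (r : Rel X) (rs : Multiset X) : Prop :=
  rs.Nodup ∧ ∀ x, x ∈ rs ↔ IsMaxEl r x

/-- Independent map of forests: `φ(r̲_F)·e̲ ≤ r̲_{F'}` for some tuple `e̲`. -/
def Independent (r : Rel X) (r' : Rel Y) (φ : X → Y) : Prop :=
  ∃ (rs : Multiset X) (rs' : Multiset Y) (es : Multiset Y),
    IsRootTuple r rs ∧ IsRootTuple r' rs' ∧ tupleLE r' (rs.map φ + es) rs'

/-- The (pre-)broad relation generated by a set of generating relations:
closure under reflexivity and broad transitivity. -/
inductive GenRel (gen : Rel X) : Rel X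
  | of : ∀ fs e, gen fs e → GenRel gen fs e
  | refl : ∀ e, GenRel gen {e} e
  | btrans : ∀ (p : Multiset (Multiset X × X)) (e : X),
      GenRel gen (p.map Prod.snd) e → (∀ q ∈ p, GenRel gen q.1 q.2) →
      GenRel gen ((p.map Prod.fst).sum) e

/-- Generators of the tensor product `S ⊗ T`: relations `s̲ × t ≤ (s,t)` and
`s × t̲ ≤ (s,t)`. -/
def tensorGen (rS : Rel A) (rT : Rel B) : Rel (A × B) := fun xs x =>
  (∃ as, rS as x.1 ∧ xs = as.map fun a => (a, x.2)) ∨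
  (∃ bs, rT bs x.2 ∧ xs = bs.map fun b => (x.1, b))

/-- The tensor product broad relation on `A × B`. -/
def tensorRel (rS : Rel A) (rT : Rel B) : Rel (A × B) := GenRel (tensorGen rS rT)

/-- Product of tuples: all pairs from `as` and `bs`. -/
def mprod (as : Multiset A) (bs : Multiset B) : Multiset (A × B) :=
  as.bind fun a => bs.map fun b => (a, b)

end BroadPaper

namespace BroadPaper

/-- `fs` is a maximal tuple strictly below `e` for the relation `R`. -/
def IsMaxBelow {X : Type u} (R : Rel X) (e : X) (fs : Multiset X) : Prop :=
  (R fs e ∧ fs ≠ ({e} : Multiset X)) ∧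
    ∀ gs, R gs e → gs ≠ ({e} : Multiset X) → tupleLE R fs gs → gs = fs

lemma exists_add_of_map_eq_add {X Y : Type*} {f : X → Y} {s : Multiset X}
    {a b : Multiset Y} (h : s.map f = a + b) :
    ∃ s₁ s₂, s = s₁ + s₂ ∧ s₁.map f = a ∧ s₂.map f = b := by
  classical
  induction a using Multiset.induction_on generalizing s with
  | empty => exact ⟨0, s, by simp, by simp, by simpa using h⟩
  | cons y a ih =>
    rw [Multiset.cons_add] at h
    obtain ⟨x, hx, rfl, hrest⟩ := (Multiset.map_eq_cons f s _ y).2 h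
    obtain ⟨s₁, s₂, hs, rfl, rfl⟩ := ih hrest
    refine ⟨x ::ₘ s₁, s₂, ?_, by simp, rfl⟩
    rw [Multiset.cons_add, ← hs, Multiset.cons_erase hx]

section TupleLE

variable {X : Type u} {r : Rel X}

lemma tupleLE_refl (hrefl : ∀ e, r {e} e) (fs : Multiset X) : tupleLE r fs fs :=
  ⟨fs.map fun x => ({x}, x), by simp, by simp [Multiset.sum_map_singleton], by simpa using fun a _ => hrefl a⟩

lemma tupleLE_cons {f₁ f₂ gs : Multiset X} {g : X} (h₁ : r f₁ g) (h₂ : tupleLE r f₂ gs) :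
    tupleLE r (f₁ + f₂) (g ::ₘ gs) := by
  obtain ⟨p, rfl, rfl, hp⟩ := h₂
  refine ⟨(f₁, g) ::ₘ p, by simp, by simp, ?_⟩
  rintro q hq
  rcases Multiset.mem_cons.1 hq with rfl | hq
  exacts [h₁, hp q hq]

lemma exists_add_of_tupleLE_add {fs g₁ g₂ : Multiset X} (h : tupleLE r fs (g₁ + g₂)) :
    ∃ f₁ f₂, fs = f₁ + f₂ ∧ tupleLE r f₁ g₁ ∧ tupleLE r f₂ g₂ := by
  obtain ⟨p, hsnd, rfl, hp⟩ := h
  obtain ⟨p₁, p₂, rfl, rfl, rfl⟩ := exists_add_of_map_eq_add hsnd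
  exact ⟨_, _, by simp, ⟨p₁, rfl, rfl, fun q hq => hp q (Multiset.mem_add.2 (Or.inl hq))⟩,
    ⟨p₂, rfl, rfl, fun q hq => hp q (Multiset.mem_add.2 (Or.inr hq))⟩⟩

lemma rel_of_tupleLE (hr : BTrans r) {fs gs : Multiset X} {e : X} (h : tupleLE r fs gs)
    (he : r gs e) : r fs e := by
  obtain ⟨p, rfl, rfl, hp⟩ := h
  exact hr p e he hp

lemma tupleLE_trans (hr : BTrans r) {fs gs hs : Multiset X}
    (h₁ : tupleLE r fs gs) (h₂ : tupleLE r gs hs) : tupleLE r fs hs := by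
  obtain ⟨q, rfl, rfl, hq⟩ := h₂
  induction q using Multiset.induction_on generalizing fs with
  | empty => simpa using h₁
  | cons c q ih =>
    simp only [Multiset.map_cons, Multiset.sum_cons] at h₁ ⊢
    obtain ⟨f₁, f₂, rfl, hf₁, hf₂⟩ := exists_add_of_tupleLE_add h₁
    exact tupleLE_cons (rel_of_tupleLE hr hf₁ (hq c (Multiset.mem_cons_self c q)))
      (ih (fun d hd => hq d (Multiset.mem_cons_of_mem hd)) hf₂)

lemma exists_descends_of_tupleLE {fs gs : Multiset X} {x : X} (h : tupleLE r fs gs)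
    (hx : x ∈ fs) : ∃ g ∈ gs, descends r x g := by
  obtain ⟨p, rfl, rfl, hp⟩ := h
  obtain ⟨_, hblock, hxc⟩ := Multiset.mem_join.1 hx
  obtain ⟨c, hc, rfl⟩ := Multiset.mem_map.1 hblock
  exact ⟨c.2, Multiset.mem_map_of_mem _ hc, c.1, hp c hc, hxc⟩

lemma tupleLE_map {Y : Type u} {r' : Rel Y} {φ : X → Y} (hφ : BroadHom r r' φ)
    {fs gs : Multiset X} (h : tupleLE r fs gs) : tupleLE r' (fs.map φ) (gs.map φ) := by
  obtain ⟨p, rfl, rfl, hp⟩ := h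
  refine ⟨p.map fun c => (c.1.map φ, φ c.2), by simp, ?_, ?_⟩
  · rw [Multiset.map_map]
    exact ((Multiset.map_join φ _).trans (by rw [Multiset.map_map]; rfl)).symm
  · simp only [Multiset.mem_map]
    rintro _ ⟨c, hc, rfl⟩
    exact hφ _ _ (hp c hc)

end TupleLE

section Broad

variable {X : Type u} {r : Rel X}

lemma IsPreBroad.descends_refl (hr : IsPreBroad r) (e : X) : descends r e e :=
  ⟨{e}, hr.1 e, Multiset.mem_singleton_self e⟩

lemma IsPreBroad.rel_add_erase [DecidableEq X] (hr : IsPreBroad r) {fs gs : Multiset X}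
    {a b : X} (h₁ : r fs b) (ha : a ∈ fs) (h₂ : r gs a) : r (gs + fs.erase a) b :=
  rel_of_tupleLE hr.2 (tupleLE_cons h₂ (tupleLE_refl hr.1 _)) (by rwa [Multiset.cons_erase ha])

lemma IsPreBroad.descends_trans (hr : IsPreBroad r) {a b c : X}
    (h₁ : descends r a b) (h₂ : descends r b c) : descends r a c := by
  classical
  obtain ⟨gs, hgs, hag⟩ := h₁
  obtain ⟨fs, hfs, hbf⟩ := h₂
  exact ⟨_, hr.rel_add_erase hfs hbf hgs, Multiset.mem_add.2 (Or.inl hag)⟩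

lemma IsPreBroad.eq_singleton_of_mem (hr : IsPreBroad r) (hs : Simple r) {gs : Multiset X}
    {e : X} (h : r gs e) (he : e ∈ gs) : gs = {e} := by
  classical
  have hnd := hs _ _ (hr.rel_add_erase h he h)
  rw [Multiset.nodup_add] at hnd
  have hrest : gs.erase e = 0 := Multiset.eq_zero_of_forall_notMem fun x hx =>
    Multiset.disjoint_left.1 hnd.2.2 (Multiset.mem_of_mem_erase hx) hx
  rw [← Multiset.cons_erase he, hrest, Multiset.cons_zero]

lemma IsPreBroad.eq_of_descends_of_mem (hr : IsPreBroad r) (hs : Simple r)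
    {fs : Multiset X} {e a b : X} (h : r fs e) (ha : a ∈ fs) (hb : b ∈ fs)
    (hab : descends r a b) : a = b := by
  classical
  by_contra hne
  obtain ⟨gs, hgs, hag⟩ := hab
  have hnd := hs _ _ (hr.rel_add_erase h hb hgs)
  rw [Multiset.nodup_add] at hnd
  exact Multiset.disjoint_left.1 hnd.2.2 hag ((Multiset.mem_erase_of_ne hne).2 ha)

lemma IsBroad.descends_antisymm (hr : IsBroad r) (hs : Simple r) {a b : X}
    (hab : descends r a b) (hba : descends r b a) : a = b := by
  classical
  obtain ⟨fs, hfs, ha⟩ := hab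
  obtain ⟨gs, hgs, hb⟩ := hba
  have h := hr.1.eq_singleton_of_mem hs (hr.1.rel_add_erase hfs ha hgs)
    (Multiset.mem_add.2 (Or.inl hb))
  have hg : gs = {b} := le_antisymm (h ▸ Multiset.le_add_right _ _) (Multiset.singleton_le.2 hb)
  have hf : fs.erase a = 0 := by
    rw [hg, Multiset.singleton_add] at h
    exact ((Multiset.singleton_eq_cons_iff _).1 h.symm).2
  rw [← Multiset.cons_erase ha, hf, Multiset.cons_zero] at hfs
  exact hr.2 a b hfs (hg ▸ hgs)

lemma IsBroad.not_descends_of_mem_upTuple (hr : IsBroad r) (hs : Simple r) {e x : X}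
    {fs : Multiset X} (h : upTuple r e fs) (hx : x ∈ fs) : ¬ descends r e x := fun hex =>
  h.1.2 (hr.1.eq_singleton_of_mem hs h.1.1
    (hr.descends_antisymm hs ⟨fs, h.1.1, hx⟩ hex ▸ hx))

lemma isMaxBelow_of_cover (hr : BTrans r) {e : X} {M N : Multiset X}
    (hM : r M e) (hMe : M ≠ {e})
    (hcover : ∀ gs, r gs e → gs ≠ {e} → tupleLE r gs M ∨ tupleLE r gs N)
    (hMN : ¬ tupleLE r M N) (hanti : ∀ gs, tupleLE r M gs → tupleLE r gs M → gs = M) :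
    IsMaxBelow r e M :=
  ⟨⟨hM, hMe⟩, fun gs hgs hne hle =>
    (hcover gs hgs hne).elim (hanti gs hle) fun h => absurd (tupleLE_trans hr hle h) hMN⟩

/-- A letter `x` of `fs` descends to a letter `g` of `gs` and on to a letter of `fs`, which can
only be `x`; so `fs ⊆ gs`, and then every block of a witness for `gs ≤ fs` is trivial. -/
lemma tupleLE_antisymm (hr : IsPreBroad r)
    (hanti : ∀ a b, descends r a b → descends r b a → a = b)
    (hsing : ∀ fs e, r fs e → e ∈ fs → fs = {e})
    {fs gs : Multiset X} (hnd : fs.Nodup) (hac : ∀ a ∈ fs, ∀ b ∈ fs, descends r a b → a = b)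
    (h₁ : tupleLE r fs gs) (h₂ : tupleLE r gs fs) : gs = fs := by
  have hsub : ∀ x ∈ fs, x ∈ gs := by
    intro x hx
    obtain ⟨g, hg, hxg⟩ := exists_descends_of_tupleLE h₁ hx
    obtain ⟨f, hf, hgf⟩ := exists_descends_of_tupleLE h₂ hg
    obtain rfl := hac x hx f hf (hr.descends_trans hxg hgf)
    rwa [← hanti g x hgf hxg]
  obtain ⟨q, rfl, rfl, hq⟩ := h₂
  have hblock : ∀ c ∈ q, c.1 = {c.2} := by
    intro c hc
    obtain ⟨_, hmem, hcd⟩ := Multiset.mem_join.1 (hsub c.2 (Multiset.mem_map_of_mem _ hc))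
    obtain ⟨d, hd, rfl⟩ := Multiset.mem_map.1 hmem
    have hcd' : c.2 = d.2 := hac _ (Multiset.mem_map_of_mem _ hc) _
      (Multiset.mem_map_of_mem _ hd) ⟨d.1, hq d hd, hcd⟩
    obtain rfl := Multiset.inj_on_of_nodup_map hnd d hd c hc hcd'.symm
    exact hsing _ _ (hq d hd) hcd
  calc (q.map Prod.fst).sum = ((q.map Prod.snd).map fun x => {x}).sum := by
        rw [Multiset.map_map]; exact congrArg _ (Multiset.map_congr rfl hblock)
    _ = q.map Prod.snd := Multiset.sum_map_singleton _

end Broad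

section Tensor

variable {A B : Type u} {rS : Rel A} {rT : Rel B}

lemma isPreBroad_tensorRel : IsPreBroad (tensorRel rS rT) := ⟨GenRel.refl, GenRel.btrans⟩

lemma broadHom_tensorRel_left (t : B) : BroadHom rS (tensorRel rS rT) fun a => (a, t) :=
  fun as _ h => GenRel.of _ _ (Or.inl ⟨as, h, rfl⟩)

lemma broadHom_tensorRel_right (s : A) : BroadHom rT (tensorRel rS rT) fun b => (s, b) :=
  fun bs _ h => GenRel.of _ _ (Or.inr ⟨bs, h, rfl⟩)

lemma descends_tensorRel (hS : IsPreBroad rS) (hT : IsPreBroad rT) {x e : A × B}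
    (h : descends (tensorRel rS rT) x e) : descends rS x.1 e.1 ∧ descends rT x.2 e.2 := by
  obtain ⟨fs, h, hx⟩ := h
  induction h generalizing x with
  | of fs e hgen =>
    rcases hgen with ⟨as, has, rfl⟩ | ⟨bs, hbs, rfl⟩
    · obtain ⟨a, ha, rfl⟩ := Multiset.mem_map.1 hx
      exact ⟨⟨as, has, ha⟩, hT.descends_refl _⟩
    · obtain ⟨b, hb, rfl⟩ := Multiset.mem_map.1 hx
      exact ⟨hS.descends_refl _, ⟨bs, hbs, hb⟩⟩
  | refl e =>
    rw [Multiset.mem_singleton.1 hx]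
    exact ⟨hS.descends_refl _, hT.descends_refl _⟩
  | btrans p e _ _ ih₁ ih₂ =>
    obtain ⟨_, hblock, hxc⟩ := Multiset.mem_join.1 hx
    obtain ⟨c, hc, rfl⟩ := Multiset.mem_map.1 hblock
    obtain ⟨h₁, h₂⟩ := ih₂ c hc hxc
    obtain ⟨h₃, h₄⟩ := ih₁ (Multiset.mem_map_of_mem _ hc)
    exact ⟨hS.descends_trans h₁ h₃, hT.descends_trans h₂ h₄⟩

lemma descends_antisymm_tensorRel (hS : IsBroad rS) (hSs : Simple rS) (hT : IsBroad rT)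
    (hTs : Simple rT) (x y : A × B) (hxy : descends (tensorRel rS rT) x y)
    (hyx : descends (tensorRel rS rT) y x) : x = y :=
  have h₁ := descends_tensorRel hS.1 hT.1 hxy
  have h₂ := descends_tensorRel hS.1 hT.1 hyx
  Prod.ext (hS.descends_antisymm hSs h₁.1 h₂.1) (hT.descends_antisymm hTs h₁.2 h₂.2)

lemma eq_singleton_of_mem_tensorRel (hS : IsBroad rS) (hSs : Simple rS) (hT : IsBroad rT)
    (hTs : Simple rT) (fs : Multiset (A × B)) (e : A × B) (h : tensorRel rS rT fs e) :
    e ∈ fs → fs = {e} := by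
  induction h with
  | of fs e hgen =>
    intro he
    rcases hgen with ⟨as, has, rfl⟩ | ⟨bs, hbs, rfl⟩
    · obtain ⟨a, ha, hae⟩ := Multiset.mem_map.1 he
      obtain rfl : a = e.1 := congrArg Prod.fst hae
      rw [hS.1.eq_singleton_of_mem hSs has ha, Multiset.map_singleton]
    · obtain ⟨b, hb, hbe⟩ := Multiset.mem_map.1 he
      obtain rfl : b = e.2 := congrArg Prod.snd hbe
      rw [hT.1.eq_singleton_of_mem hTs hbs hb, Multiset.map_singleton]
  | refl e => exact fun _ => rfl
  | btrans p e h₁ h₂ ih₁ ih₂ =>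
    intro he
    obtain ⟨_, hblock, hec⟩ := Multiset.mem_join.1 he
    obtain ⟨c, hc, rfl⟩ := Multiset.mem_map.1 hblock
    obtain rfl : c.2 = e := descends_antisymm_tensorRel hS hSs hT hTs _ _
      ⟨_, h₁, Multiset.mem_map_of_mem _ hc⟩ ⟨c.1, h₂ c hc, hec⟩
    obtain ⟨c₀, rfl, -⟩ := Multiset.map_eq_singleton.1 (ih₁ (Multiset.mem_map_of_mem _ hc))
    obtain rfl := Multiset.mem_singleton.1 hc
    simpa using ih₂ c hc hec

lemma tupleLE_or_tupleLE_of_tensorRel {s : A} {t : B} {ss : Multiset A} {ts : Multiset B}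
    (hs : upTuple rS s ss) (ht : upTuple rT t ts) {gs : Multiset (A × B)}
    (h : tensorRel rS rT gs (s, t)) :
    gs = {(s, t)} ∨ tupleLE (tensorRel rS rT) gs (ss.map fun a => (a, t)) ∨
      tupleLE (tensorRel rS rT) gs (ts.map fun b => (s, b)) := by
  generalize he : (s, t) = e at h
  induction h with
  | of fs e hgen =>
    subst he
    rcases hgen with ⟨as, has, rfl⟩ | ⟨bs, hbs, rfl⟩
    · by_cases has' : as = {s}
      · exact Or.inl (by simp [has'])
      · exact Or.inr (Or.inl (tupleLE_map (broadHom_tensorRel_left t) (hs.2 as has has')))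
    · by_cases hbs' : bs = {t}
      · exact Or.inl (by simp [hbs'])
      · exact Or.inr (Or.inr (tupleLE_map (broadHom_tensorRel_right s) (ht.2 bs hbs hbs')))
  | refl e => exact Or.inl rfl
  | btrans p e _ h₂ ih₁ ih₂ =>
    subst he
    have hp : tupleLE (tensorRel rS rT) (p.map Prod.fst).sum (p.map Prod.snd) :=
      ⟨p, rfl, rfl, h₂⟩
    rcases ih₁ rfl with hsing | hL | hR
    · obtain ⟨c, rfl, hc⟩ := Multiset.map_eq_singleton.1 hsing
      simpa [hc] using ih₂ c (Multiset.mem_singleton_self c) hc.symm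
    · exact Or.inr (Or.inl (tupleLE_trans isPreBroad_tensorRel.2 hp hL))
    · exact Or.inr (Or.inr (tupleLE_trans isPreBroad_tensorRel.2 hp hR))

lemma not_tupleLE_map_left_map_right (hS : IsPreBroad rS) (hT : IsBroad rT) (hTs : Simple rT)
    {s : A} {t : B} {ss : Multiset A} {ts : Multiset B} (ht : upTuple rT t ts) (hss : ss ≠ 0) :
    ¬ tupleLE (tensorRel rS rT) (ss.map fun a => (a, t)) (ts.map fun b => (s, b)) := by
  intro h
  obtain ⟨a, ha⟩ := Multiset.exists_mem_of_ne_zero hss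
  obtain ⟨_, hy, hd⟩ := exists_descends_of_tupleLE h (Multiset.mem_map_of_mem _ ha)
  obtain ⟨b, hb, rfl⟩ := Multiset.mem_map.1 hy
  exact hT.not_descends_of_mem_upTuple hTs ht hb (descends_tensorRel hS hT.1 hd).2

lemma not_tupleLE_map_right_map_left (hS : IsBroad rS) (hSs : Simple rS) (hT : IsPreBroad rT)
    {s : A} {t : B} {ss : Multiset A} {ts : Multiset B} (hs : upTuple rS s ss) (hts : ts ≠ 0) :
    ¬ tupleLE (tensorRel rS rT) (ts.map fun b => (s, b)) (ss.map fun a => (a, t)) := by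
  intro h
  obtain ⟨b, hb⟩ := Multiset.exists_mem_of_ne_zero hts
  obtain ⟨_, hy, hd⟩ := exists_descends_of_tupleLE h (Multiset.mem_map_of_mem _ hb)
  obtain ⟨a, ha, rfl⟩ := Multiset.mem_map.1 hy
  exact hS.not_descends_of_mem_upTuple hSs hs ha (descends_tensorRel hS.1 hT hd).1

lemma eq_of_descends_of_mem_map_left (hS : IsPreBroad rS) (hSs : Simple rS)
    (hT : IsPreBroad rT) {s : A} {ss : Multiset A} (hs : rS ss s) (t : B) :
    ∀ x ∈ ss.map fun a => (a, t), ∀ y ∈ ss.map fun a => (a, t),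
      descends (tensorRel rS rT) x y → x = y := by
  simp only [Multiset.mem_map]
  rintro _ ⟨a, ha, rfl⟩ _ ⟨b, hb, rfl⟩ h
  rw [hS.eq_of_descends_of_mem hSs hs ha hb (descends_tensorRel hS hT h).1]

lemma eq_of_descends_of_mem_map_right (hS : IsPreBroad rS) (hT : IsPreBroad rT)
    (hTs : Simple rT) {t : B} {ts : Multiset B} (ht : rT ts t) (s : A) :
    ∀ x ∈ ts.map fun b => (s, b), ∀ y ∈ ts.map fun b => (s, b),
      descends (tensorRel rS rT) x y → x = y := by
  simp only [Multiset.mem_map]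
  rintro _ ⟨a, ha, rfl⟩ _ ⟨b, hb, rfl⟩ h
  rw [hT.eq_of_descends_of_mem hTs ht ha hb (descends_tensorRel hS hT h).2]

end Tensor

/-- At a fork `e = (s,t)` of `S ⊗ T` (both coordinates
nodes) there are exactly two maximal tuples strictly below `e`, namely
`s^↑ × t` and `s × t^↑`; in particular neither is `≤` the other. -/
theorem stmt13 {A B : Type u} (rS : Rel A) (rT : Rel B)
    (hS : IsTree rS) (hT : IsTree rT) (s : A) (t : B)
    (ss : Multiset A) (ts : Multiset B)
    (hs : upTuple rS s ss) (hns : ss ≠ 0)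
    (ht : upTuple rT t ts) (hnt : ts ≠ 0) :
    IsMaxBelow (tensorRel rS rT) (s, t) (ss.map fun a => (a, t)) ∧
    IsMaxBelow (tensorRel rS rT) (s, t) (ts.map fun b => (s, b)) ∧
    (ss.map fun a => (a, t)) ≠ (ts.map fun b => (s, b)) ∧
    (∀ fs, IsMaxBelow (tensorRel rS rT) (s, t) fs →
      fs = (ss.map fun a => (a, t)) ∨ fs = (ts.map fun b => (s, b))) ∧
    ¬ tupleLE (tensorRel rS rT) (ss.map fun a => (a, t))
        (ts.map fun b => (s, b)) ∧
    ¬ tupleLE (tensorRel rS rT) (ts.map fun b => (s, b))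
        (ss.map fun a => (a, t)) := by
  obtain ⟨hSb, -, hSs, -⟩ := hS
  obtain ⟨hTb, -, hTs, -⟩ := hT
  have hpre : IsPreBroad (tensorRel rS rT) := isPreBroad_tensorRel
  have antisymm := @tupleLE_antisymm _ _ hpre (descends_antisymm_tensorRel hSb hSs hTb hTs)
    (eq_singleton_of_mem_tensorRel hSb hSs hTb hTs)
  have hL : tensorRel rS rT (ss.map fun a => (a, t)) (s, t) :=
    broadHom_tensorRel_left t _ _ hs.1.1
  have hR : tensorRel rS rT (ts.map fun b => (s, b)) (s, t) :=
    broadHom_tensorRel_right s _ _ ht.1.1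
  have hLe : (ss.map fun a => (a, t)) ≠ {(s, t)} := by
    simpa using (Multiset.map_injective (Prod.mk_left_injective t)).ne hs.1.2
  have hRe : (ts.map fun b => (s, b)) ≠ {(s, t)} := by
    simpa using (Multiset.map_injective (Prod.mk_right_injective s)).ne ht.1.2
  have hcover := fun gs (h : tensorRel rS rT gs (s, t)) (hne : gs ≠ {(s, t)}) =>
    (tupleLE_or_tupleLE_of_tensorRel hs ht h).resolve_left hne
  have hLR := not_tupleLE_map_left_map_right hSb.1 hTb hTs (s := s) ht hns
  have hRL := not_tupleLE_map_right_map_left hSb hSs hTb.1 (t := t) hs hnt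
  have maxL := isMaxBelow_of_cover hpre.2 hL hLe hcover hLR fun gs h₁ h₂ =>
    antisymm ((hSs _ _ hs.1.1).map (Prod.mk_left_injective t))
      (eq_of_descends_of_mem_map_left hSb.1 hSs hTb.1 hs.1.1 t) h₁ h₂
  have maxR := isMaxBelow_of_cover hpre.2 hR hRe (fun gs h hne => (hcover gs h hne).symm) hRL
    fun gs h₁ h₂ => antisymm ((hTs _ _ ht.1.1).map (Prod.mk_right_injective s))
      (eq_of_descends_of_mem_map_right hSb.1 hTb.1 hTs ht.1.1 s) h₁ h₂
  refine ⟨maxL, maxR, fun h => hLR (h ▸ tupleLE_refl hpre.1 _), fun fs hfs => ?_, hLR, hRL⟩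
  rcases hcover fs hfs.1.1 hfs.1.2 with h | h
  · exact Or.inl (hfs.2 _ hL hLe h).symm
  · exact Or.inr (hfs.2 _ hR hRe h).symm

end BroadPaper
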